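/- arXiv:1209.6385 — 4 statements merged into one kernel-verified Lean document; each statement's English description precedes it below -/
import Mathlib

section
/- Let L < U be positive, α ∈ (−∞,0)\{−1}, F(x) = (L^{1+α} − x^{1+α})/(L^{1+α} − U^{1+α}), and let r + c ∈ ℝ, ζ ∈ ℝ^N with α = ‖ζ‖²/(2(r+c)). Then F solves the nonlinear ODE (r+c)·x·F'(x) − (1/2)‖ζ‖²·(F'(x))²/F''(x) = 0 for all x ∈ (L, U). -/
/-!
With `p = 1 + α`, `F' = -p x^α / d` and `F'' = -p α x^(α-1) / d = (α / x) F'`, so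
`F'² / F'' = x F' / α`, and the ODE reduces to `(r + c) x F' = (‖ζ‖² / (2α)) x F'`,
which is the defining relation of `α`.
-/

open Matrix

theorem deriv_const_sub_rpow_div (c d p : ℝ) :
    deriv (fun y : ℝ => (c - y ^ p) / d) = fun y => -(p * y ^ (p - 1)) / d := by
  funext y
  simp [deriv_div_const, deriv_const_sub, Real.deriv_rpow_const]

theorem deriv_deriv_const_sub_rpow_div (c d α : ℝ) {x : ℝ} (hx : x ≠ 0) :
    deriv (deriv fun y : ℝ => (c - y ^ (1 + α)) / d) x
      = α / x * deriv (fun y : ℝ => (c - y ^ (1 + α)) / d) x := by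
  rw [deriv_const_sub_rpow_div, add_sub_cancel_left]
  simp only [deriv_div_const, deriv.fun_neg, deriv_const_mul_field', Real.deriv_rpow_const]
  rw [Real.rpow_sub_one hx]
  ring

/-- The degenerate cases `a = 0`, `x = 0`, `y = 0` hold because division by zero gives `0`. -/
theorem hjb_residual_eq_zero {a s x y z : ℝ} (hs : s ≠ 0) (hz : z = s / (2 * a) / x * y) :
    a * x * y - 1 / 2 * s * y ^ 2 / z = 0 := by
  subst hz
  rcases eq_or_ne a 0 with rfl | ha
  · simp
  rcases eq_or_ne x 0 with rfl | hx
  · simp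
  rcases eq_or_ne y 0 with rfl | hy
  · simp
  field_simp
  ring

theorem stmt6_general (N : ℕ) (L U a : ℝ) (hL : 0 < L)
    (ζ : Fin N → ℝ) (hζ : ζ ≠ 0) :
    let α : ℝ := (ζ ⬝ᵥ ζ) / (2 * a)
    let F : ℝ → ℝ := fun x => (L ^ (1 + α) - x ^ (1 + α)) / (L ^ (1 + α) - U ^ (1 + α))
    ∀ x ∈ Set.Ioo L U,
      a * x * deriv F x - 1 / 2 * (ζ ⬝ᵥ ζ) * (deriv F x) ^ 2 / deriv (deriv F) x = 0 := by
  intro α F x hx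
  exact hjb_residual_eq_zero (dotProduct_self_eq_zero.not.mpr hζ)
    (deriv_deriv_const_sub_rpow_div _ _ α (hL.trans hx.1).ne')

theorem stmt6 (N : ℕ) (L U a : ℝ) (hL : 0 < L) (hLU : L < U)
    (ζ : Fin N → ℝ) (hζ : ζ ≠ 0) (ha : a < 0) :
    let α : ℝ := (ζ ⬝ᵥ ζ) / (2 * a)
    let F : ℝ → ℝ := fun x => (L ^ (1 + α) - x ^ (1 + α)) / (L ^ (1 + α) - U ^ (1 + α))
    ∀ x ∈ Set.Ioo L U,
      a * x * deriv F x - 1 / 2 * (ζ ⬝ᵥ ζ) * (deriv F x) ^ 2 / deriv (deriv F) x = 0 :=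
  stmt6_general N L U a hL ζ hζ
end

section
/- Let β < 0, L > 0, and define F(x) = (1/|β|)·log(x/L) for x ∈ [L, ∞). Then F(L) = 0, F is strictly increasing and strictly concave on (L, ∞), and F satisfies 1 + (r+c)xF'(x) − (1/2)‖ζ‖²(F'(x))²/F''(x) = 0 on (L, ∞) whenever β = (r+c) + (1/2)‖ζ‖². -/
/-! With `c = 1/|β|` the candidate is `F x = c log (x/L)`, so `F' = c/x > 0` and `F'' = -c/x² < 0`.
Substituting, `x F'` and `F'²/F''` are the constants `c` and `-c`, and the HJB residual collapses to
`1 + c (a + ‖ζ‖²/2) = 1 + c β = 1 - 1 = 0` because `β < 0`. -/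

open Matrix Real Set

section LogScale

variable {c L x : ℝ}

theorem hasDerivAt_const_mul_log_div (c : ℝ) (hL : L ≠ 0) (hx : x ≠ 0) :
    HasDerivAt (fun y => c * log (y / L)) (c / x) x := by
  have h := (((hasDerivAt_id x).div_const L).log (div_ne_zero hx hL)).const_mul c
  rwa [id, div_div_div_cancel_right₀ hL, ← mul_div_assoc, mul_one] at h

theorem deriv_const_mul_log_div (c : ℝ) (hL : L ≠ 0) (hx : x ≠ 0) :
    deriv (fun y => c * log (y / L)) x = c / x :=
  (hasDerivAt_const_mul_log_div c hL hx).deriv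

theorem deriv_deriv_const_mul_log_div (c : ℝ) (hL : L ≠ 0) (hx : x ≠ 0) :
    deriv (deriv fun y => c * log (y / L)) x = -(c / x ^ 2) := by
  have hF' : (deriv fun y => c * log (y / L)) =ᶠ[nhds x] fun y => c * y⁻¹ := by
    filter_upwards [isOpen_ne.mem_nhds hx] with y hy
    rw [deriv_const_mul_log_div c hL hy, div_eq_mul_inv]
  rw [hF'.deriv_eq, ((hasDerivAt_inv hx).const_mul c).deriv]
  ring

theorem continuousOn_const_mul_log_div (c : ℝ) (hL : L ≠ 0) :
    ContinuousOn (fun y => c * log (y / L)) (Ioi 0) := fun _ hx =>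
  (hasDerivAt_const_mul_log_div c hL (ne_of_gt hx)).continuousAt.continuousWithinAt

theorem strictMonoOn_const_mul_log_div (hc : 0 < c) (hL : L ≠ 0) :
    StrictMonoOn (fun y => c * log (y / L)) (Ioi 0) := by
  refine strictMonoOn_of_deriv_pos (convex_Ioi 0) (continuousOn_const_mul_log_div c hL) ?_
  intro x hx
  rw [interior_Ioi] at hx
  rw [deriv_const_mul_log_div c hL (ne_of_gt hx)]
  exact div_pos hc hx

theorem strictConcaveOn_const_mul_log_div (hc : 0 < c) (hL : L ≠ 0) :
    StrictConcaveOn ℝ (Ioi 0) (fun y => c * log (y / L)) := by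
  refine strictConcaveOn_of_deriv2_neg (convex_Ioi 0) (continuousOn_const_mul_log_div c hL) ?_
  intro x hx
  rw [interior_Ioi] at hx
  rw [Function.iterate_succ_apply', Function.iterate_one,
    deriv_deriv_const_mul_log_div c hL (ne_of_gt hx), neg_lt_zero]
  exact div_pos hc (pow_pos hx 2)

end LogScale

theorem hjb_residual_of_log_derivs (a q : ℝ) {c x : ℝ} (hx : x ≠ 0) :
    1 + a * x * (c / x) - 1 / 2 * q * (c / x) ^ 2 / (-(c / x ^ 2)) = 1 + c * (a + q / 2) := by
  field_simp
  ring

theorem stmt12_general (N : ℕ) (L a : ℝ) (hL : 0 < L) (ζ : Fin N → ℝ)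
    (hβ : a + (ζ ⬝ᵥ ζ) / 2 < 0) :
    let β : ℝ := a + (ζ ⬝ᵥ ζ) / 2
    let F : ℝ → ℝ := fun x => 1 / |β| * Real.log (x / L)
    F L = 0 ∧ StrictMonoOn F (Set.Ioi L) ∧ StrictConcaveOn ℝ (Set.Ioi L) F ∧
    ∀ x ∈ Set.Ioi L,
      1 + a * x * deriv F x - 1 / 2 * (ζ ⬝ᵥ ζ) * (deriv F x) ^ 2 / deriv (deriv F) x = 0 := by
  intro β F
  have hc : 0 < 1 / |β| := one_div_pos.mpr (abs_pos.mpr hβ.ne)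
  have hIoi : Ioi L ⊆ Ioi 0 := Ioi_subset_Ioi hL.le
  refine ⟨by simp [F, div_self hL.ne'],
    (strictMonoOn_const_mul_log_div hc hL.ne').mono hIoi,
    (strictConcaveOn_const_mul_log_div hc hL.ne').subset hIoi (convex_Ioi L), fun x hx => ?_⟩
  have hx : x ≠ 0 := (hL.trans hx).ne'
  rw [deriv_const_mul_log_div _ hL.ne' hx, deriv_deriv_const_mul_log_div _ hL.ne' hx,
    hjb_residual_of_log_derivs a _ hx, abs_of_neg hβ,
    one_div, inv_neg, neg_mul, inv_mul_cancel₀ (hβ.ne : β ≠ 0), add_neg_cancel]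

theorem stmt12 (N : ℕ) (L a : ℝ) (hL : 0 < L) (ζ : Fin N → ℝ) (hζ : ζ ≠ 0)
    (hβ : a + (ζ ⬝ᵥ ζ) / 2 < 0) :
    let β : ℝ := a + (ζ ⬝ᵥ ζ) / 2
    let F : ℝ → ℝ := fun x => 1 / |β| * Real.log (x / L)
    F L = 0 ∧ StrictMonoOn F (Set.Ioi L) ∧ StrictConcaveOn ℝ (Set.Ioi L) F ∧
    ∀ x ∈ Set.Ioi L,
      1 + a * x * deriv F x - 1 / 2 * (ζ ⬝ᵥ ζ) * (deriv F x) ^ 2 / deriv (deriv F) x = 0 :=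
  stmt12_general N L a hL ζ hβ
end

section
/- Let β > 0, U > 0, and define G(x) = (1/β)·log(U/x) for x ∈ (0, U]. Then G(U) = 0, G is strictly decreasing and strictly convex on (0, U), and G satisfies 1 + (r+c)xG'(x) − (1/2)‖ζ‖²(G'(x))²/G''(x) = 0 on (0, U), where β = (r+c) + (1/2)‖ζ‖². -/
/-!
With `β > 0`, `G' = -1/(βx) < 0` and `G'' = 1/(βx²) > 0` on `x > 0`, which gives strict
monotonicity and strict convexity. Moreover `x G' = -1/β` and `G'² / G'' = 1/β`, so the equation
reduces to `1 - ((r+c) + ‖ζ‖²/2) / β = 0`, the definition of `β`.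
-/

open Matrix

open Real Set Filter Topology

section LogConstDiv

variable {U x : ℝ}

lemma hasDerivAt_mul_log_const_div (c : ℝ) (hU : U ≠ 0) (hx : x ≠ 0) :
    HasDerivAt (fun y => c * log (U / y)) (-c / x) x := by
  have h := (((hasDerivAt_inv hx).const_mul U).log (div_ne_zero hU hx)).const_mul c
  simp only [← div_eq_mul_inv] at h
  exact h.congr_deriv (by field_simp)

lemma deriv_mul_log_const_div (c : ℝ) (hU : U ≠ 0) (hx : x ≠ 0) :
    deriv (fun y => c * log (U / y)) x = -c / x :=
  (hasDerivAt_mul_log_const_div c hU hx).deriv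

lemma deriv_deriv_mul_log_const_div (c : ℝ) (hU : U ≠ 0) (hx : x ≠ 0) :
    deriv (deriv fun y => c * log (U / y)) x = c / x ^ 2 := by
  have h_eq : (deriv fun y => c * log (U / y)) =ᶠ[𝓝 x] fun y => -c * y⁻¹ := by
    filter_upwards [isOpen_ne.mem_nhds hx] with y hy
    rw [deriv_mul_log_const_div c hU hy, div_eq_mul_inv]
  rw [h_eq.deriv_eq, deriv_const_mul_field, deriv_inv]
  ring

lemma continuousOn_mul_log_const_div (c : ℝ) (hU : U ≠ 0) :
    ContinuousOn (fun y => c * log (U / y)) (Ioi 0) := fun _ hx =>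
  (hasDerivAt_mul_log_const_div c hU (ne_of_gt hx)).continuousAt.continuousWithinAt

variable {c : ℝ}

lemma strictAntiOn_mul_log_const_div (hc : 0 < c) (hU : U ≠ 0) :
    StrictAntiOn (fun y => c * log (U / y)) (Ioi 0) := by
  refine strictAntiOn_of_deriv_neg (convex_Ioi 0) (continuousOn_mul_log_const_div c hU) ?_
  intro x hx
  rw [interior_Ioi, mem_Ioi] at hx
  rw [deriv_mul_log_const_div c hU hx.ne']
  exact div_neg_of_neg_of_pos (neg_neg_of_pos hc) hx

lemma strictConvexOn_mul_log_const_div (hc : 0 < c) (hU : U ≠ 0) :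
    StrictConvexOn ℝ (Ioi 0) (fun y => c * log (U / y)) := by
  refine strictConvexOn_of_deriv2_pos' (convex_Ioi 0) (continuousOn_mul_log_const_div c hU) ?_
  rintro x (hx : 0 < x)
  change 0 < deriv (deriv fun y => c * log (U / y)) x
  rw [deriv_deriv_mul_log_const_div c hU hx.ne']
  positivity

end LogConstDiv

theorem stmt13_general (N : ℕ) (U a : ℝ) (hU : 0 < U) (ζ : Fin N → ℝ)
    (hβ : 0 < a + (ζ ⬝ᵥ ζ) / 2) :
    let β : ℝ := a + (ζ ⬝ᵥ ζ) / 2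
    let G : ℝ → ℝ := fun x => 1 / β * Real.log (U / x)
    G U = 0 ∧ StrictAntiOn G (Set.Ioo 0 U) ∧ StrictConvexOn ℝ (Set.Ioo 0 U) G ∧
    ∀ x ∈ Set.Ioo 0 U,
      1 + a * x * deriv G x - 1 / 2 * (ζ ⬝ᵥ ζ) * (deriv G x) ^ 2 / deriv (deriv G) x = 0 := by
  intro β G
  have hc : 0 < 1 / β := one_div_pos.mpr hβ
  refine ⟨by simp [G, div_self hU.ne'],
    (strictAntiOn_mul_log_const_div hc hU.ne').mono Ioo_subset_Ioi_self,
    (strictConvexOn_mul_log_const_div hc hU.ne').subset Ioo_subset_Ioi_self (convex_Ioo 0 U), ?_⟩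
  rintro x ⟨hx, -⟩
  rw [deriv_mul_log_const_div _ hU.ne' hx.ne', deriv_deriv_mul_log_const_div _ hU.ne' hx.ne']
  have hβ0 : β ≠ 0 := hβ.ne'
  field_simp
  ring

theorem stmt13 (N : ℕ) (U a : ℝ) (hU : 0 < U) (ζ : Fin N → ℝ) (hζ : ζ ≠ 0)
    (hβ : 0 < a + (ζ ⬝ᵥ ζ) / 2) :
    let β : ℝ := a + (ζ ⬝ᵥ ζ) / 2
    let G : ℝ → ℝ := fun x => 1 / β * Real.log (U / x)
    G U = 0 ∧ StrictAntiOn G (Set.Ioo 0 U) ∧ StrictConvexOn ℝ (Set.Ioo 0 U) G ∧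
    ∀ x ∈ Set.Ioo 0 U,
      1 + a * x * deriv G x - 1 / 2 * (ζ ⬝ᵥ ζ) * (deriv G x) ^ 2 / deriv (deriv G) x = 0 :=
  stmt13_general N U a hU ζ hβ
end

section
/- Fix d ∉ {0, −1}, U > 0, a := r + c ∈ ℝ, ζ ∈ ℝ^N, ρ > 0 and set G(x) = (x/U)^{−d} for x > 0. Then G solves the nonlinear ODE −ρG(x) + a·x·G'(x) − (1/2)‖ζ‖²·(G'(x))²/G''(x) = 0 for all x > 0 if and only if d satisfies a·d² + (a + k + ρ)d + ρ = 0 with k = ‖ζ‖²/2. -/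
/-! With `z = x / U` and `p = -d`, the power `G = z ^ p` satisfies `x G' = p G` and
`G' ^ 2 / G'' = p / (p - 1) G`, so the left-hand side of the equation is `G x` times the constant
`-ρ - a d - k d / (d + 1)`. As `G x > 0`, the equation holds for all `x > 0` exactly when this
constant vanishes, and multiplying by `d + 1 ≠ 0` gives the quadratic. -/

open Matrix

namespace ScaledRpow

variable {U : ℝ} (p : ℝ)

theorem hasDerivAt (hU : 0 < U) {x : ℝ} (hx : 0 < x) :
    HasDerivAt (fun y : ℝ => (y / U) ^ p) (p / U * (x / U) ^ (p - 1)) x := by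
  have hxU : x / U ≠ 0 := (div_pos hx hU).ne'
  have hcomp := (Real.hasDerivAt_rpow_const (p := p) (Or.inl hxU)).comp x
    ((hasDerivAt_id x).div_const U)
  exact hcomp.congr_deriv (by ring)

theorem deriv_eq (hU : 0 < U) {x : ℝ} (hx : 0 < x) :
    deriv (fun y : ℝ => (y / U) ^ p) x = p / U * (x / U) ^ (p - 1) :=
  (hasDerivAt p hU hx).deriv

theorem deriv_deriv_eq (hU : 0 < U) {x : ℝ} (hx : 0 < x) :
    deriv (deriv fun y : ℝ => (y / U) ^ p) x = p * (p - 1) / U ^ 2 * (x / U) ^ (p - 2) := by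
  have hderiv : deriv (fun y : ℝ => (y / U) ^ p) =ᶠ[nhds x]
      fun y => p / U * (y / U) ^ (p - 1) :=
    Filter.eventually_of_mem (Ioi_mem_nhds hx) fun y hy => deriv_eq p hU hy
  rw [hderiv.deriv_eq, ((hasDerivAt (p - 1) hU hx).const_mul (p / U)).deriv]
  ring_nf

theorem mul_deriv_eq (hU : 0 < U) {x : ℝ} (hx : 0 < x) :
    x * deriv (fun y : ℝ => (y / U) ^ p) x = p * (x / U) ^ p := by
  have hz : 0 < x / U := div_pos hx hU
  rw [deriv_eq p hU hx, Real.rpow_sub hz, Real.rpow_one]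
  field_simp

theorem deriv_sq_div_deriv_deriv_eq (hU : 0 < U) (hp : p ≠ 1) {x : ℝ} (hx : 0 < x) :
    deriv (fun y : ℝ => (y / U) ^ p) x ^ 2 / deriv (deriv fun y : ℝ => (y / U) ^ p) x
      = p / (p - 1) * (x / U) ^ p := by
  have hz : 0 < x / U := div_pos hx hU
  have hp1 : p - 1 ≠ 0 := sub_ne_zero.mpr hp
  rw [deriv_eq p hU hx, deriv_deriv_eq p hU hx, Real.rpow_sub hz, Real.rpow_sub hz,
    Real.rpow_one, Real.rpow_two]
  rcases eq_or_ne p 0 with rfl | hp0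
  · simp -- both sides vanish, the left one as the junk value `0 / 0`
  field_simp [hz.ne', (Real.rpow_pos_of_pos hz p).ne']

end ScaledRpow

theorem stmt16_general (N : ℕ) (U a d ρ : ℝ) (hU : 0 < U)
    (ζ : Fin N → ℝ) (hd1 : d ≠ -1) :
    let k : ℝ := (ζ ⬝ᵥ ζ) / 2
    let G : ℝ → ℝ := fun x => (x / U) ^ (-d)
    (∀ x : ℝ, 0 < x →
        -ρ * G x + a * x * deriv G x
          - 1 / 2 * (ζ ⬝ᵥ ζ) * (deriv G x) ^ 2 / deriv (deriv G) x = 0) ↔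
      a * d ^ 2 + (a + k + ρ) * d + ρ = 0 := by
  intro k G
  have hd1' : d + 1 ≠ 0 := fun h => hd1 (eq_neg_of_add_eq_zero_left h)
  have hlhs : ∀ x, 0 < x → -ρ * G x + a * x * deriv G x
      - 1 / 2 * (ζ ⬝ᵥ ζ) * (deriv G x) ^ 2 / deriv (deriv G) x
      = G x * (-ρ - a * d - k * (d / (d + 1))) := by
    intro x hx
    have hratio := ScaledRpow.deriv_sq_div_deriv_deriv_eq (-d) hU (by contrapose! hd1; linarith) hx
    rw [mul_div_assoc, hratio, mul_assoc a, ScaledRpow.mul_deriv_eq (-d) hU hx,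
      show -d / (-d - 1) = d / (d + 1) by rw [← neg_add', neg_div_neg_eq]]
    ring
  have hquad : -ρ - a * d - k * (d / (d + 1)) = 0 ↔ a * d ^ 2 + (a + k + ρ) * d + ρ = 0 := by
    field_simp
    constructor <;> intro h <;> linear_combination -h
  simp only [← hquad]
  constructor
  · intro h
    have hGU : G U = 1 := by simp only [G, div_self hU.ne', Real.one_rpow]
    simpa only [hGU, one_mul] using (hlhs U hU).symm.trans (h U hU)
  · intro hc x hx
    rw [hlhs x hx, hc, mul_zero]

theorem stmt16 (N : ℕ) (U a d ρ : ℝ) (hU : 0 < U) (hρ : 0 < ρ)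
    (ζ : Fin N → ℝ) (hd0 : d ≠ 0) (hd1 : d ≠ -1) :
    let k : ℝ := (ζ ⬝ᵥ ζ) / 2
    let G : ℝ → ℝ := fun x => (x / U) ^ (-d)
    (∀ x : ℝ, 0 < x →
        -ρ * G x + a * x * deriv G x
          - 1 / 2 * (ζ ⬝ᵥ ζ) * (deriv G x) ^ 2 / deriv (deriv G) x = 0) ↔
      a * d ^ 2 + (a + k + ρ) * d + ρ = 0 :=
  stmt16_general N U a d ρ hU ζ hd1
end
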